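/- Let (𝔭₀, 𝔭∞) be a complementary pair of height-one parabolic subalgebras of a finite-dimensional real semisimple Lie algebra 𝔤, U an open subset of a finite-dimensional real normed space E, F : U → 𝔤 a smooth map with F(x) ∈ 𝔭∞^⊥ for all x, and ω a 𝔤-valued 1-form on U with ω_x(u) ∈ 𝔭₀^⊥ for all x, u. Define the 𝔤-valued 1-form η by η_x(u) := exp(ad F(x))(ω_x(u)). Then η is closed if and only if ω is closed and ⁅(DF)_x(u), ω_x(v)⁆ = ⁅(DF)_x(v), ω_x(u)⁆ for all x, u, v (i.e. ⁅dF ∧ ω⁆ = 0). -/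

import Mathlib

open Module

/-- A Lie algebra structure on a real normed space, recorded as a bilinear bracket.
(Using a bracket carried as data avoids typeclass diamonds between the normed and
the Lie-algebraic structure.) -/
structure LieStructure (L : Type*) [NormedAddCommGroup L] [NormedSpace ℝ L] where
  bracket : L →ₗ[ℝ] L →ₗ[ℝ] L
  alternating : ∀ x : L, bracket x x = 0
  jacobi : ∀ x y z : L, bracket x (bracket y z) =
    bracket (bracket x y) z + bracket y (bracket x z)

namespace LieStructure

variable {L : Type*} [NormedAddCommGroup L] [NormedSpace ℝ L] (B : LieStructure L)

/-- The adjoint action `ad x = ⁅x, ·⁆`. -/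
def ad (x : L) : Module.End ℝ L := B.bracket x

/-- The Killing form `κ(x, y) = tr (ad x ∘ ad y)`. -/
noncomputable def killing (x y : L) : ℝ := LinearMap.trace ℝ L (B.ad x * B.ad y)

/-- Semisimplicity, via Cartan's criterion: the Killing form is nondegenerate. -/
def IsSemisimple : Prop := ∀ x : L, (∀ y : L, B.killing x y = 0) → x = 0

/-- A Lie subalgebra: a submodule closed under the bracket. -/
def IsSubalgebra (p : Submodule ℝ L) : Prop :=
  ∀ x ∈ p, ∀ y ∈ p, B.bracket x y ∈ p

/-- The Killing polar `𝔭^⊥`. -/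
noncomputable def polar (p : Submodule ℝ L) : Submodule ℝ L where
  carrier := {x | ∀ y ∈ p, B.killing x y = 0}
  add_mem' := fun {a b} ha hb y hy => by
    have : B.killing (a + b) y = B.killing a y + B.killing b y := by
      simp [killing, ad, map_add, add_mul]
    rw [this, ha y hy, hb y hy, add_zero]
  zero_mem' := fun y hy => by simp [killing, ad, map_zero, zero_mul]
  smul_mem' := fun c a ha y hy => by
    have : B.killing (c • a) y = c * B.killing a y := by
      simp [killing, ad, map_smul, smul_mul_assoc]
    rw [this, ha y hy, mul_zero]

/-- A height-one parabolic subalgebra: a subalgebra whose Killing polar is an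
abelian (hence nilpotent) subalgebra. -/
def IsH1Parabolic (p : Submodule ℝ L) : Prop :=
  B.IsSubalgebra p ∧ ∀ x ∈ B.polar p, ∀ y ∈ B.polar p, B.bracket x y = 0

/-- Complementary pair of height-one parabolic subalgebras:
`𝔤 = 𝔭 ⊕ 𝔮^⊥` and `𝔤 = 𝔮 ⊕ 𝔭^⊥`. -/
noncomputable def ComplPair (p q : Submodule ℝ L) : Prop :=
  IsCompl p (B.polar q) ∧ IsCompl q (B.polar p)

/-- `exp (ad z)`, the finite exponential series of the adjoint action (exhaustive
whenever `ad z` is nilpotent, since then `(ad z)^(dim 𝔤 + 1) = 0`). -/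
noncomputable def expAd [FiniteDimensional ℝ L] (z : L) : Module.End ℝ L :=
  ∑ k ∈ Finset.range (Module.finrank ℝ L + 1), (k.factorial : ℝ)⁻¹ • (B.ad z) ^ k

end LieStructure

open LieStructure

/-!
Since `𝔭∞^⊥` is abelian and `⁅𝔭∞^⊥, 𝔤⁆ ⊆ 𝔭∞`, the operator `ad F` satisfies `(ad F)³ = 0`, so
`exp (ad F) = 1 + ad F + ½ (ad F)²`, and `F` commutes with every value of `dF`. Differentiating
this quadratic expression gives `dη = exp (ad F) (dω + ⁅dF ∧ ω⁆)`. As `exp (ad F)` is invertible,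
`η` is closed iff `dω + ⁅dF ∧ ω⁆ = 0`; the first summand lies in `𝔭₀^⊥` and the second in `𝔭∞`,
and these two subspaces meet only in `0`.
-/

open Filter Topology

theorem HasFDerivAt.apply_mem_of_eventually_mem {E V : Type*}
    [NormedAddCommGroup E] [NormedSpace ℝ E] [NormedAddCommGroup V] [NormedSpace ℝ V]
    {f : E → V} {f' : E →L[ℝ] V} {x : E} {p : Submodule ℝ V} [FiniteDimensional ℝ p]
    (hf : HasFDerivAt f f' x) (hp : ∀ᶠ y in 𝓝 x, f y ∈ p) (u : E) : f' u ∈ p := by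
  obtain ⟨P, hP⟩ := Submodule.ClosedComplemented.of_finiteDimensional p
  have hfP : HasFDerivAt f ((p.subtypeL.comp P).comp f') x :=
    ((p.subtypeL.comp P).hasFDerivAt.comp x hf).congr_of_eventuallyEq <|
      hp.mono fun y hy => by simp [hP ⟨f y, hy⟩]
  rw [hf.unique hfP]
  exact (P (f' u)).2

theorem fderiv_quadratic_comp_apply {E W V : Type*}
    [NormedAddCommGroup E] [NormedSpace ℝ E] [NormedAddCommGroup W] [NormedSpace ℝ W]
    [NormedAddCommGroup V] [NormedSpace ℝ V]
    {A : E → V →L[ℝ] V} {A' : E →L[ℝ] V →L[ℝ] V} {T : E → W →L[ℝ] V} {T' : E →L[ℝ] W →L[ℝ] V}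
    {x : E} (hA : HasFDerivAt A A' x) (hT : HasFDerivAt T T' x) (u : E) (w : W) :
    fderiv ℝ (fun y => T y + (A y).comp (T y) + (2⁻¹ : ℝ) • (A y).comp ((A y).comp (T y))) x u w =
      T' u w + (A x (T' u w) + A' u (T x w)) +
        (2⁻¹ : ℝ) • (A x (A x (T' u w)) + A x (A' u (T x w)) + A' u (A x (T x w))) := by
  have hD : HasFDerivAt
      (fun y => T y + (A y).comp (T y) + (2⁻¹ : ℝ) • (A y).comp ((A y).comp (T y))) _ x :=
    (hT.add (hA.clm_comp hT)).add ((hA.clm_comp (hA.clm_comp hT)).const_smul (2⁻¹ : ℝ))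
  rw [hD.fderiv]
  simp only [add_apply, smul_apply, ContinuousLinearMap.compL_apply,
    ContinuousLinearMap.flip_apply, ContinuousLinearMap.comp_apply, map_add]

theorem Module.End.pow_finrank_eq_zero_of_isNilpotent {K M : Type*} [Field K] [AddCommGroup M]
    [Module K M] [FiniteDimensional K M] {φ : Module.End K M} (h : IsNilpotent φ) :
    φ ^ Module.finrank K M = 0 := by
  simpa [h.charpoly_eq_X_pow_finrank] using φ.aeval_self_charpoly

namespace LieStructure

variable {L : Type*} [NormedAddCommGroup L] [NormedSpace ℝ L] (B : LieStructure L)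

theorem bracket_left_comm_of_bracket_eq_zero {x y : L} (h : B.bracket x y = 0) (w : L) :
    B.bracket x (B.bracket y w) = B.bracket y (B.bracket x w) := by
  rw [B.jacobi, h, map_zero, LinearMap.zero_apply, zero_add]

theorem ad_bracket (x y : L) : B.ad (B.bracket x y) = B.ad x * B.ad y - B.ad y * B.ad x := by
  ext w
  simp only [ad, LinearMap.sub_apply, Module.End.mul_apply]
  rw [B.jacobi x y w, add_sub_cancel_right]

theorem killing_comm (x y : L) : B.killing x y = B.killing y x :=
  LinearMap.trace_mul_comm ℝ (B.ad x) (B.ad y)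

theorem killing_bracket (x y z : L) :
    B.killing (B.bracket x y) z = B.killing x (B.bracket y z) := by
  have ad_cycle : LinearMap.trace ℝ L (B.ad y * (B.ad x * B.ad z))
      = LinearMap.trace ℝ L (B.ad x * (B.ad z * B.ad y)) := by
    rw [LinearMap.trace_mul_comm, mul_assoc]
  simp only [killing, ad_bracket, sub_mul, mul_sub, map_sub, mul_assoc, ad_cycle]

noncomputable def killingForm : LinearMap.BilinForm ℝ L :=
  ((LinearMap.mul ℝ (Module.End ℝ L)).compl₁₂ B.bracket B.bracket).compr₂ (LinearMap.trace ℝ L)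

theorem killingForm_apply (x y : L) : B.killingForm x y = B.killing x y := rfl

theorem killingForm_isRefl : B.killingForm.IsRefl := fun x y h => by
  rwa [killingForm_apply, killing_comm] at h

theorem polar_eq_orthogonal (p : Submodule ℝ L) : B.polar p = B.killingForm.orthogonal p := by
  ext x
  refine forall₂_congr fun y _ => ?_
  rw [killingForm_apply, killing_comm]

theorem bracket_mem_polar {p : Submodule ℝ L} (hp : B.IsSubalgebra p) {z m : L}
    (hz : z ∈ B.polar p) (hm : m ∈ p) : B.bracket z m ∈ B.polar p := fun y hy => by
  rw [killing_bracket]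
  exact hz _ (hp m hm y hy)

section FiniteDimensional

variable [FiniteDimensional ℝ L]

theorem polar_polar (hss : B.IsSemisimple) (p : Submodule ℝ L) : B.polar (B.polar p) = p := by
  have hnd : B.killingForm.Nondegenerate :=
    B.killingForm_isRefl.nondegenerate_iff_separatingLeft.mpr hss
  rw [polar_eq_orthogonal, polar_eq_orthogonal,
    LinearMap.BilinForm.orthogonal_orthogonal hnd B.killingForm_isRefl]

theorem bracket_mem_of_mem_polar (hss : B.IsSemisimple) {p : Submodule ℝ L}
    (hp : B.IsH1Parabolic p) {z : L} (hz : z ∈ B.polar p) (w : L) : B.bracket z w ∈ p := by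
  rw [← B.polar_polar hss p]
  intro y hy
  rw [killing_comm, ← killing_bracket, hp.2 y hy z hz]
  simp [killing, ad]

theorem ad_pow_three_eq_zero (hss : B.IsSemisimple) {p : Submodule ℝ L}
    (hp : B.IsH1Parabolic p) {z : L} (hz : z ∈ B.polar p) : B.ad z ^ 3 = 0 := by
  ext y
  have h2 : B.bracket z (B.bracket z y) ∈ B.polar p :=
    B.bracket_mem_polar hp.1 hz (B.bracket_mem_of_mem_polar hss hp hz y)
  simpa [ad, pow_succ] using hp.2 z hz _ h2

theorem expAd_eq_of_ad_pow_three {z : L} (hz : B.ad z ^ 3 = 0) :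
    B.expAd z = 1 + B.ad z + (2⁻¹ : ℝ) • B.ad z ^ 2 := by
  set n := min 3 (Module.finrank ℝ L)
  have hn : B.ad z ^ n = 0 := by
    rcases min_choice 3 (Module.finrank ℝ L) with h | h <;> rw [show n = _ from h]
    exacts [hz, Module.End.pow_finrank_eq_zero_of_isNilpotent ⟨3, hz⟩]
  have hsum : ∀ N, n ≤ N → ∑ k ∈ Finset.range N, (k.factorial : ℝ)⁻¹ • B.ad z ^ k
      = ∑ k ∈ Finset.range n, (k.factorial : ℝ)⁻¹ • B.ad z ^ k := fun N hN =>
    (Finset.sum_subset (Finset.range_subset_range.2 hN) fun k _ hk => by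
      rw [pow_eq_zero_of_le (by simpa using hk) hn, smul_zero]).symm
  rw [expAd, hsum _ (by omega), ← hsum 3 (min_le_left _ _)]
  simp [Finset.sum_range_succ]

theorem isUnit_expAd {z : L} (hz : IsNilpotent (B.ad z)) : IsUnit (B.expAd z) := by
  set P := ∑ k ∈ Finset.range (Module.finrank ℝ L), ((k + 1).factorial : ℝ)⁻¹ • B.ad z ^ k
  have hP : B.expAd z = 1 + B.ad z * P := by
    rw [expAd, Finset.sum_range_succ', Finset.mul_sum, add_comm]
    simp [pow_succ']
  have hcomm : Commute (B.ad z) P :=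
    Commute.sum_right _ _ _ fun k _ => ((Commute.refl _).pow_right k).smul_right _
  rw [hP]
  exact (hcomm.isNilpotent_mul_right hz).isUnit_one_add

noncomputable def adCLM : L →L[ℝ] L →L[ℝ] L :=
  LinearMap.toContinuousLinearMap (LinearMap.toContinuousLinearMap.toLinearMap ∘ₗ B.bracket)

@[simp] theorem adCLM_apply (z w : L) : B.adCLM z w = B.bracket z w := rfl

theorem toContinuousLinearMap_expAd_comp {W : Type*} [NormedAddCommGroup W] [NormedSpace ℝ W]
    {z : L} (hz : B.ad z ^ 3 = 0) (T : W →L[ℝ] L) :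
    (LinearMap.toContinuousLinearMap (B.expAd z)).comp T =
      T + (B.adCLM z).comp T + (2⁻¹ : ℝ) • (B.adCLM z).comp ((B.adCLM z).comp T) := by
  ext w
  simp [B.expAd_eq_of_ad_pow_three hz, pow_two, ad]

theorem fderiv_expAd_comp_apply {E W : Type*} [NormedAddCommGroup E] [NormedSpace ℝ E]
    [NormedAddCommGroup W] [NormedSpace ℝ W] {F : E → L} {F' : E →L[ℝ] L}
    {ω : E → W →L[ℝ] L} {ω' : E →L[ℝ] W →L[ℝ] L} {x : E}
    (hF : HasFDerivAt F F' x) (hω : HasFDerivAt ω ω' x)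
    (hcube : ∀ᶠ y in 𝓝 x, B.ad (F y) ^ 3 = 0) (hcomm : ∀ u, B.bracket (F' u) (F x) = 0)
    (u : E) (w : W) :
    fderiv ℝ (fun y => (LinearMap.toContinuousLinearMap (B.expAd (F y))).comp (ω y)) x u w =
      B.expAd (F x) (ω' u w) + B.bracket (F' u) (ω x w) +
        B.bracket (F x) (B.bracket (F' u) (ω x w)) := by
  have hA : HasFDerivAt (fun y => B.adCLM (F y)) (B.adCLM.comp F') x :=
    B.adCLM.hasFDerivAt.comp x hF
  rw [Filter.EventuallyEq.fderiv_eq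
      (hcube.mono fun y hy => B.toContinuousLinearMap_expAd_comp hy (ω y)),
    fderiv_quadratic_comp_apply hA hω, B.expAd_eq_of_ad_pow_three hcube.self_of_nhds]
  simp only [adCLM_apply, ContinuousLinearMap.comp_apply, LinearMap.add_apply,
    LinearMap.smul_apply, Module.End.one_apply, pow_two, Module.End.mul_apply, ad,
    B.bracket_left_comm_of_bracket_eq_zero (hcomm u)]
  module

theorem expAd_apply_add_add_bracket_eq_zero_iff (hss : B.IsSemisimple) {p q : Submodule ℝ L}
    (hp : B.IsH1Parabolic p) (hpq : Disjoint p q) {z s t : L} (hz : z ∈ B.polar p)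
    (hs : s ∈ q) (ht : t ∈ p) :
    B.expAd z s + (t + B.bracket z t) = 0 ↔ s = 0 ∧ t = 0 := by
  have hcube := B.ad_pow_three_eq_zero hss hp hz
  -- `⁅z, t⁆ ∈ p^⊥` is killed by `ad z`, so `t + ⁅z, t⁆` is the full exponential of `t`.
  have hexp_t : t + B.bracket z t = B.expAd z t := by
    have := hp.2 z hz _ (B.bracket_mem_polar hp.1 hz ht)
    simp [B.expAd_eq_of_ad_pow_three hcube, pow_two, ad, this]
  refine ⟨fun h => ?_, by rintro ⟨rfl, rfl⟩; simp⟩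
  have hinj := ((Module.End.isUnit_iff _).1 (B.isUnit_expAd ⟨3, hcube⟩)).1
  rw [hexp_t, ← map_add, ← map_zero (B.expAd z)] at h
  have hst : s = -t := eq_neg_of_add_eq_zero_left (hinj h)
  have hs0 : s = 0 := Submodule.disjoint_def.1 hpq s (hst ▸ neg_mem ht) hs
  exact ⟨hs0, by simpa [hs0] using hst⟩

theorem fderiv_expAd_comp_apply_comm_iff {E : Type*} [NormedAddCommGroup E] [NormedSpace ℝ E]
    (hss : B.IsSemisimple) {p q : Submodule ℝ L} (hp : B.IsH1Parabolic p) (hpq : Disjoint p q)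
    {F : E → L} {F' : E →L[ℝ] L} {ω : E → E →L[ℝ] L} {ω' : E →L[ℝ] E →L[ℝ] L} {x : E}
    (hF : HasFDerivAt F F' x) (hω : HasFDerivAt ω ω' x)
    (hFval : ∀ᶠ y in 𝓝 x, F y ∈ B.polar p) (hωval : ∀ᶠ y in 𝓝 x, ∀ w, ω y w ∈ q) (u v : E) :
    fderiv ℝ (fun y => (LinearMap.toContinuousLinearMap (B.expAd (F y))).comp (ω y)) x u v =
        fderiv ℝ (fun y => (LinearMap.toContinuousLinearMap (B.expAd (F y))).comp (ω y)) x v u ↔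
      ω' u v = ω' v u ∧ B.bracket (F' u) (ω x v) = B.bracket (F' v) (ω x u) := by
  have hF' (u : E) : F' u ∈ B.polar p := hF.apply_mem_of_eventually_mem hFval u
  have hω' (u v : E) : ω' u v ∈ q :=
    ((ContinuousLinearMap.apply ℝ L v).hasFDerivAt.comp x hω).apply_mem_of_eventually_mem
      (hωval.mono fun y hy => hy v) u
  have hcube : ∀ᶠ y in 𝓝 x, B.ad (F y) ^ 3 = 0 :=
    hFval.mono fun y hy => B.ad_pow_three_eq_zero hss hp hy
  have hcomm (u : E) : B.bracket (F' u) (F x) = 0 := hp.2 _ (hF' u) _ hFval.self_of_nhds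
  rw [← sub_eq_zero, B.fderiv_expAd_comp_apply hF hω hcube hcomm,
    B.fderiv_expAd_comp_apply hF hω hcube hcomm, ← sub_eq_zero (a := ω' u v),
    ← sub_eq_zero (a := B.bracket _ _), ← B.expAd_apply_add_add_bracket_eq_zero_iff hss hp hpq
      hFval.self_of_nhds (sub_mem (hω' u v) (hω' v u))
      (sub_mem (B.bracket_mem_of_mem_polar hss hp (hF' u) _)
        (B.bracket_mem_of_mem_polar hss hp (hF' v) _))]
  congr! 1
  simp only [map_sub]
  abel

end FiniteDimensional

end LieStructure

theorem eta_closed_iff_omega_closed_and_bracket_symm_general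
    {L : Type*} [NormedAddCommGroup L] [NormedSpace ℝ L] [FiniteDimensional ℝ L]
    (B : LieStructure L) (hss : B.IsSemisimple)
    {E : Type*} [NormedAddCommGroup E] [NormedSpace ℝ E]
    (U : Set E) (hU : IsOpen U)
    (p0 pinf : Submodule ℝ L)
    (hinf : B.IsH1Parabolic pinf)
    (hc : B.ComplPair p0 pinf)
    (F : E → L) (hF : ContDiffOn ℝ (⊤ : ℕ∞) F U)
    (hFval : ∀ x ∈ U, F x ∈ B.polar pinf)
    (ω : E → E →L[ℝ] L) (hω : ContDiffOn ℝ (⊤ : ℕ∞) ω U)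
    (hωval : ∀ x ∈ U, ∀ u : E, ω x u ∈ B.polar p0)
    (η : E → E →L[ℝ] L)
    (hη : ∀ x : E, η x = (LinearMap.toContinuousLinearMap (B.expAd (F x))).comp (ω x)) :
    (∀ x ∈ U, ∀ u v : E, fderiv ℝ η x u v = fderiv ℝ η x v u) ↔
    ((∀ x ∈ U, ∀ u v : E, fderiv ℝ ω x u v = fderiv ℝ ω x v u) ∧
      (∀ x ∈ U, ∀ u v : E,
        B.bracket (fderiv ℝ F x u) (ω x v) = B.bracket (fderiv ℝ F x v) (ω x u))) := by
  have hpointwise : ∀ x ∈ U, ∀ u v : E, fderiv ℝ η x u v = fderiv ℝ η x v u ↔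
      fderiv ℝ ω x u v = fderiv ℝ ω x v u ∧
        B.bracket (fderiv ℝ F x u) (ω x v) = B.bracket (fderiv ℝ F x v) (ω x u) := by
    intro x hx u v
    have hxU : U ∈ 𝓝 x := hU.mem_nhds hx
    rw [funext hη]
    exact B.fderiv_expAd_comp_apply_comm_iff hss hinf hc.2.disjoint
      ((hF.differentiableOn (by simp)).differentiableAt hxU).hasFDerivAt
      ((hω.differentiableOn (by simp)).differentiableAt hxU).hasFDerivAt
      (eventually_of_mem hxU hFval) (eventually_of_mem hxU hωval) u v
  simp +contextual only [hpointwise, forall_and]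

/-- **Isothermic maps in stereoprojection.**  With `F` valued in `𝔭∞^⊥`, `ω` valued
in `𝔭₀^⊥`, and `η_x(u) := exp(ad F(x))(ω_x(u))`, the form `η` is closed if and only
if `ω` is closed and `⁅dF ∧ ω⁆ = 0`. -/
theorem eta_closed_iff_omega_closed_and_bracket_symm
    {L : Type*} [NormedAddCommGroup L] [NormedSpace ℝ L] [FiniteDimensional ℝ L]
    (B : LieStructure L) (hss : B.IsSemisimple)
    {E : Type*} [NormedAddCommGroup E] [NormedSpace ℝ E] [FiniteDimensional ℝ E]
    (U : Set E) (hU : IsOpen U)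
    (p0 pinf : Submodule ℝ L)
    (h0 : B.IsH1Parabolic p0) (hinf : B.IsH1Parabolic pinf)
    (hc : B.ComplPair p0 pinf)
    (F : E → L) (hF : ContDiffOn ℝ (⊤ : ℕ∞) F U)
    (hFval : ∀ x ∈ U, F x ∈ B.polar pinf)
    (ω : E → E →L[ℝ] L) (hω : ContDiffOn ℝ (⊤ : ℕ∞) ω U)
    (hωval : ∀ x ∈ U, ∀ u : E, ω x u ∈ B.polar p0)
    (η : E → E →L[ℝ] L)
    (hη : ∀ x : E, η x = (LinearMap.toContinuousLinearMap (B.expAd (F x))).comp (ω x)) :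
    (∀ x ∈ U, ∀ u v : E, fderiv ℝ η x u v = fderiv ℝ η x v u) ↔
    ((∀ x ∈ U, ∀ u v : E, fderiv ℝ ω x u v = fderiv ℝ ω x v u) ∧
      (∀ x ∈ U, ∀ u v : E,
        B.bracket (fderiv ℝ F x u) (ω x v) = B.bracket (fderiv ℝ F x v) (ω x u))) :=
  eta_closed_iff_omega_closed_and_bracket_symm_general B hss U hU p0 pinf hinf hc F hF hFval ω hω
    hωval η hη
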